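/- arXiv:1812.11891 — 6 statements merged into one kernel-verified Lean document; each statement's English description precedes it below -/
import Mathlib

section
/- Let β, γ ∈ [0,1] and θ ∈ (0,1) be real numbers, and set P = (1-β-γ)θ + γ. If 0 < P < 1, then the Fisher information quantity I(β,γ) = (1-β-γ)² / (P(1-P)) satisfies I(β,γ) ≤ 1/(θ(1-θ)). -/
/-- Fisher information of a single distorted Bernoulli polling response is at most
`1/(θ(1-θ))`, the undistorted Fisher information. -/
theorem fisher_info_distorted_le (β γ θ : ℝ)
    (hβ : β ∈ Set.Icc (0:ℝ) 1) (hγ : γ ∈ Set.Icc (0:ℝ) 1)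
    (hθ : θ ∈ Set.Ioo (0:ℝ) 1)
    (P : ℝ) (hPdef : P = (1 - β - γ) * θ + γ)
    (hP0 : 0 < P) (hP1 : P < 1) :
    (1 - β - γ)^2 / (P * (1 - P)) ≤ 1 / (θ * (1 - θ)) := by
  obtain ⟨hβ0, hβ1⟩ := hβ
  obtain ⟨hγ0, hγ1⟩ := hγ
  obtain ⟨hθ0, hθ1⟩ := hθ
  have hPP : 0 < P * (1 - P) := mul_pos hP0 (by linarith)
  have hθθ : 0 < θ * (1 - θ) := mul_pos hθ0 (by linarith)
  rw [div_le_div_iff₀ hPP hθθ]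
  subst hPdef
  rcases le_or_gt 0 (1 - β - γ) with h | h
  · nlinarith [mul_nonneg (mul_nonneg h hθ0.le) (mul_nonneg h (by linarith : (0:ℝ) ≤ 1 - θ)), mul_nonneg hβ0 hγ0, mul_nonneg (mul_nonneg h hθ0.le) hβ0, mul_nonneg (mul_nonneg h (by linarith : (0:ℝ) ≤ 1 - θ)) hγ0]
  · nlinarith [mul_nonneg (by linarith : (0:ℝ) ≤ β + γ - 1) hθ0.le, mul_nonneg (by linarith : (0:ℝ) ≤ 1 - β) (by linarith : (0:ℝ) ≤ 1 - γ), mul_nonneg (mul_nonneg (by linarith : (0:ℝ) ≤ β + γ - 1) hθ0.le) (by linarith : (0:ℝ) ≤ 1 - γ), mul_nonneg (mul_nonneg (by linarith : (0:ℝ) ≤ β + γ - 1) (by linarith : (0:ℝ) ≤ 1 - θ)) (by linarith : (0:ℝ) ≤ 1 - β)]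
end

section
/- Let F: ℝ≥0 → ℝ≥0, p* > 0 and c** > 0 be such that F(c**) = c**/p* and p*·F(c) ≤ c for every c ≥ 0. Then: (i) for every m ∈ ℕ and every c₁, …, c_m ≥ 0 with c₁ + ⋯ + c_m ≤ C, one has F(c₁) + ⋯ + F(c_m) ≤ C/p*; and (ii) with m = ⌊C/c**⌋, one has m·c** ≤ C and m·F(c**) ≥ C/p* − F(c**). In particular, the supremum of total achievable Fisher information over allocations of a budget C lies between max{0, C/p* − F(c**)} and C/p*. -/
/-- Bounds on the total Fisher information achievable from a single data source under a
budget `C`, where `F c` is the Fisher information of one sample acquired at cost `c`,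
`pstar = cstar / F cstar` is the optimal cost-over-Fisher-information ratio, attained
at per-sample cost `cstar`. -/
theorem fisher_budget_bounds (F : ℝ → ℝ) (pstar cstar C : ℝ)
    (hF0 : ∀ c, 0 ≤ c → 0 ≤ F c)
    (hpstar : 0 < pstar) (hcstar : 0 < cstar)
    (hFeq : F cstar = cstar / pstar)
    (hFle : ∀ c, 0 ≤ c → pstar * F c ≤ c)
    (hC : 0 ≤ C) :
    (∀ (m : ℕ) (c : Fin m → ℝ), (∀ i, 0 ≤ c i) → (∑ i, c i) ≤ C →
      (∑ i, F (c i)) ≤ C / pstar)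
    ∧ ((⌊C / cstar⌋₊ : ℝ) * cstar ≤ C
        ∧ C / pstar - F cstar ≤ (⌊C / cstar⌋₊ : ℝ) * F cstar)
    ∧ (max 0 (C / pstar - F cstar) ≤
        sSup {s : ℝ | ∃ (m : ℕ) (c : Fin m → ℝ),
          (∀ i, 0 ≤ c i) ∧ (∑ i, c i) ≤ C ∧ s = ∑ i, F (c i)}
      ∧ sSup {s : ℝ | ∃ (m : ℕ) (c : Fin m → ℝ),
          (∀ i, 0 ≤ c i) ∧ (∑ i, c i) ≤ C ∧ s = ∑ i, F (c i)} ≤ C / pstar) := by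
  have hupper : ∀ (m : ℕ) (c : Fin m → ℝ), (∀ i, 0 ≤ c i) → (∑ i, c i) ≤ C →
      (∑ i, F (c i)) ≤ C / pstar := by
    intro m c hc hsum
    rw [le_div_iff₀' hpstar]
    calc pstar * ∑ i, F (c i) = ∑ i, pstar * F (c i) := by rw [Finset.mul_sum]
      _ ≤ ∑ i, c i := Finset.sum_le_sum fun i _ => hFle (c i) (hc i)
      _ ≤ C := hsum
  have hm1 : (⌊C / cstar⌋₊ : ℝ) * cstar ≤ C := by
    rw [← le_div_iff₀ hcstar]
    exact Nat.floor_le (div_nonneg hC hcstar.le)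
  have hFcs : 0 < F cstar := by rw [hFeq]; positivity
  have hm2 : C / pstar - F cstar ≤ (⌊C / cstar⌋₊ : ℝ) * F cstar := by
    have h1 : C / cstar < (⌊C / cstar⌋₊ : ℝ) + 1 := Nat.lt_floor_add_one _
    have h2 : (C / cstar) * F cstar ≤ ((⌊C / cstar⌋₊ : ℝ) + 1) * F cstar :=
      mul_le_mul_of_nonneg_right h1.le hFcs.le
    have h3 : (C / cstar) * F cstar = C / pstar := by
      rw [hFeq]; field_simp
    nlinarith
  refine ⟨hupper, ⟨hm1, hm2⟩, ?_⟩
  set S := {s : ℝ | ∃ (m : ℕ) (c : Fin m → ℝ),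
      (∀ i, 0 ≤ c i) ∧ (∑ i, c i) ≤ C ∧ s = ∑ i, F (c i)} with hS
  have hbdd : BddAbove S := ⟨C / pstar, fun s ⟨m, c, hc, hsum, hs⟩ => hs ▸ hupper m c hc hsum⟩
  have h0 : (0 : ℝ) ∈ S := ⟨0, fun i => 0, fun i => le_refl _, by simp [hC], by simp⟩
  have hmem : ((⌊C / cstar⌋₊ : ℝ) * F cstar) ∈ S := by
    refine ⟨⌊C / cstar⌋₊, fun _ => cstar, fun _ => hcstar.le, ?_, ?_⟩ <;>
      simp [Finset.sum_const, hm1]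
  constructor
  · exact max_le (le_csSup hbdd h0) (le_trans hm2 (le_csSup hbdd hmem))
  · apply csSup_le ⟨0, h0⟩
    rintro s ⟨m, c, hc, hsum, rfl⟩
    exact hupper m c hc hsum
end

section
/- Let K ≥ 1 be an integer. For each k ∈ {1,…,K}, let F_k: ℝ≥0 → ℝ≥0 be nondecreasing, and suppose there exist c_k** > 0 and p_k* > 0 such that F_k(c_k**) = c_k**/p_k* and p_k*·F_k(c) ≤ c for every c ≥ 0. Let a₁, …, a_K > 0. For C > 0, define V(C) as the infimum, over all K-tuples of finite cost lists (c_i^k ≥ 0, 1 ≤ i ≤ m_k, m_k ∈ ℕ) with total cost ∑_{k=1}^K ∑_{i=1}^{m_k} c_i^k ≤ C and with ∑_{i=1}^{m_k} F_k(c_i^k) > 0 for every k, of ∑_{k=1}^K a_k² / (∑_{i=1}^{m_k} F_k(c_i^k)). Then lim_{C→∞} C·V(C) = (∑_{k=1}^K a_k·√(p_k*))². -/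
/-!
A design whose samples from source `k` carry total Fisher information `G k` costs at least
`∑ p*_k G_k`, so Cauchy–Schwarz, `(∑ a_k √p*_k)² ≤ (∑ p*_k G_k) · ∑ a_k² / G_k`, gives
`C · V(C) ≥ (∑ a_k √p*_k)²`. Equality in Cauchy–Schwarz needs `G_k ∝ a_k / √p*_k` and all samples
at the optimal ratio `p*_k`; spending the fraction `a_k √p*_k / ∑_j a_j √p*_j` of the budget on
samples of source `k` at cost `c_k**` achieves this up to rounding the number of samples down,
an error that vanishes as `C → ∞`.
-/

open Filter Finset Topology

variable {ι : Type*} [Fintype ι]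

def achievableCRB (F : ι → ℝ → ℝ) (a : ι → ℝ) (C : ℝ) : Set ℝ :=
  {y | ∃ (m : ι → ℕ) (c : (k : ι) → Fin (m k) → ℝ),
    (∀ k i, 0 ≤ c k i) ∧ (∑ k, ∑ i, c k i) ≤ C ∧
    (∀ k, 0 < ∑ i, F k (c k i)) ∧
    y = ∑ k, a k ^ 2 / ∑ i, F k (c k i)}

theorem achievableCRB_bddBelow {F : ι → ℝ → ℝ} {a : ι → ℝ} {C : ℝ} :
    BddBelow (achievableCRB F a C) :=
  ⟨0, by
    rintro y ⟨m, c, -, -, hG, rfl⟩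
    exact sum_nonneg fun k _ => div_nonneg (sq_nonneg _) (hG k).le⟩

theorem sq_sum_mul_sqrt_le_sum_sq_div_mul_sum (a : ι → ℝ) {p G : ι → ℝ}
    (hp : ∀ k, 0 ≤ p k) (hG : ∀ k, 0 < G k) :
    (∑ k, a k * √(p k)) ^ 2 ≤ (∑ k, a k ^ 2 / G k) * ∑ k, p k * G k := by
  have hcs := sum_mul_sq_le_sq_mul_sq univ (fun k => a k / √(G k)) (fun k => √(p k * G k))
  have hprod (k : ι) : a k / √(G k) * √(p k * G k) = a k * √(p k) := by
    have : √(G k) ≠ 0 := (Real.sqrt_pos.2 (hG k)).ne'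
    rw [Real.sqrt_mul (hp k)]
    field_simp
  simpa only [hprod, div_pow, Real.sq_sqrt (hG _).le,
    Real.sq_sqrt (mul_nonneg (hp _) (hG _).le)] using hcs

theorem sq_sum_mul_sqrt_le_mul_of_mem_achievableCRB {F : ι → ℝ → ℝ} {a p : ι → ℝ} {C y : ℝ}
    (hp : ∀ k, 0 ≤ p k) (hFle : ∀ k c, 0 ≤ c → p k * F k c ≤ c)
    (hy : y ∈ achievableCRB F a C) :
    (∑ k, a k * √(p k)) ^ 2 ≤ y * C := by
  obtain ⟨m, c, hc, hcost, hG, rfl⟩ := hy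
  have hinfo : ∑ k, p k * ∑ i, F k (c k i) ≤ C := by
    refine (sum_le_sum fun k _ => ?_).trans hcost
    rw [mul_sum]
    exact sum_le_sum fun i _ => hFle k _ (hc k i)
  calc _ ≤ (∑ k, a k ^ 2 / ∑ i, F k (c k i)) * ∑ k, p k * ∑ i, F k (c k i) :=
        sq_sum_mul_sqrt_le_sum_sq_div_mul_sum a hp hG
    _ ≤ _ := mul_le_mul_of_nonneg_left hinfo
        (sum_nonneg fun k _ => div_nonneg (sq_nonneg _) (hG k).le)

theorem sq_sum_mul_sqrt_le_mul_sInf_achievableCRB {F : ι → ℝ → ℝ} {a p : ι → ℝ} {C : ℝ}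
    (hp : ∀ k, 0 ≤ p k) (hFle : ∀ k c, 0 ≤ c → p k * F k c ≤ c) (hC : 0 < C)
    (hne : (achievableCRB F a C).Nonempty) :
    (∑ k, a k * √(p k)) ^ 2 ≤ C * sInf (achievableCRB F a C) := by
  rw [← div_le_iff₀' hC]
  exact le_csInf hne fun y hy =>
    (div_le_iff₀ hC).2 (sq_sum_mul_sqrt_le_mul_of_mem_achievableCRB hp hFle hy)

/-- Sample source `k` `⌊x k * C⌋₊` times at cost `c k`. -/
theorem eventually_floor_allocation_mem_achievableCRB {F : ι → ℝ → ℝ} (a : ι → ℝ)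
    {c x : ι → ℝ} (hc : ∀ k, 0 ≤ c k) (hFc : ∀ k, 0 < F k (c k)) (hx : ∀ k, 0 < x k)
    (hbudget : ∑ k, x k * c k ≤ 1) :
    ∀ᶠ C in atTop, ∑ k, a k ^ 2 / (⌊x k * C⌋₊ * F k (c k)) ∈ achievableCRB F a C := by
  have hsamples : ∀ᶠ C in atTop, ∀ k, 1 ≤ x k * C :=
    eventually_all.2 fun k => (tendsto_id.const_mul_atTop (hx k)).eventually_ge_atTop 1
  filter_upwards [eventually_ge_atTop 0, hsamples] with C hC hsamples
  refine ⟨fun k => ⌊x k * C⌋₊, fun k _ => c k, fun k _ => hc k, ?_, fun k => ?_, ?_⟩ <;>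
    simp only [sum_const, card_univ, Fintype.card_fin, nsmul_eq_mul]
  · calc ∑ k, (⌊x k * C⌋₊ : ℝ) * c k ≤ ∑ k, x k * C * c k :=
          sum_le_sum fun k _ =>
            mul_le_mul_of_nonneg_right (Nat.floor_le (zero_le_one.trans (hsamples k))) (hc k)
      _ = C * ∑ k, x k * c k := by rw [mul_sum]; exact sum_congr rfl fun k _ => by ring
      _ ≤ C := mul_le_of_le_one_right hC hbudget
  · exact mul_pos (by exact_mod_cast Nat.floor_pos.2 (hsamples k)) (hFc k)

theorem tendsto_mul_sum_div_nat_floor_mul {b x f : ι → ℝ} (hx : ∀ k, 0 < x k)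
    (hf : ∀ k, f k ≠ 0) :
    Tendsto (fun C => C * ∑ k, b k / (⌊x k * C⌋₊ * f k)) atTop
      (𝓝 (∑ k, b k / (x k * f k))) := by
  have hrewrite (C : ℝ) : C * ∑ k, b k / (⌊x k * C⌋₊ * f k) =
      ∑ k, b k / ((⌊x k * C⌋₊ / C) * f k) := by
    rw [mul_sum]
    refine sum_congr rfl fun k _ => ?_
    rw [div_mul_eq_mul_div, div_div_eq_mul_div]
    ring
  simp only [hrewrite]
  exact tendsto_finsetSum _ fun k _ =>
    tendsto_const_nhds.div ((tendsto_nat_floor_mul_div_atTop (hx k).le).mul_const (f k))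
      (mul_ne_zero (hx k).ne' (hf k))

theorem clean_sensing_main_general (K : ℕ)
    (F : Fin K → ℝ → ℝ)
    (cstar pstar : Fin K → ℝ)
    (hcstar : ∀ k, 0 < cstar k) (hpstar : ∀ k, 0 < pstar k)
    (hFeq : ∀ k, F k (cstar k) = cstar k / pstar k)
    (hFle : ∀ k c, 0 ≤ c → pstar k * F k c ≤ c)
    (a : Fin K → ℝ) (ha : ∀ k, 0 < a k)
    (V : ℝ → ℝ)
    (hV : ∀ C : ℝ, V C = sInf {y : ℝ |
      ∃ (m : Fin K → ℕ) (c : (k : Fin K) → Fin (m k) → ℝ),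
        (∀ k i, 0 ≤ c k i) ∧ (∑ k, ∑ i, c k i) ≤ C ∧
        (∀ k, 0 < ∑ i, F k (c k i)) ∧
        y = ∑ k, (a k)^2 / (∑ i, F k (c k i))}) :
    Filter.Tendsto (fun C : ℝ => C * V C) Filter.atTop
      (nhds ((∑ k, a k * Real.sqrt (pstar k))^2)) := by
  set S := ∑ k, a k * √(pstar k)
  have hweight (k : Fin K) : 0 < a k * √(pstar k) := mul_pos (ha k) (Real.sqrt_pos.2 (hpstar k))
  have hS (k : Fin K) : 0 < S :=
    (hweight k).trans_le (single_le_sum (fun j _ => (hweight j).le) (mem_univ k))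
  set x : Fin K → ℝ := fun k => a k * √(pstar k) / S / cstar k
  have hx (k : Fin K) : 0 < x k := div_pos (div_pos (hweight k) (hS k)) (hcstar k)
  have hbudget : ∑ k, x k * cstar k ≤ 1 := by
    simp only [x, div_mul_cancel₀ _ (hcstar _).ne', ← sum_div]
    exact div_self_le_one S
  have hFc (k : Fin K) : 0 < F k (cstar k) := hFeq k ▸ div_pos (hcstar k) (hpstar k)
  have hlimit_term (k : Fin K) :
      a k ^ 2 / (x k * F k (cstar k)) = S * (a k * √(pstar k)) := by
    simp only [x, hFeq]
    field_simp [(hS k).ne', (hcstar k).ne', (Real.sqrt_pos.2 (hpstar k)).ne']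
    rw [Real.sq_sqrt (hpstar k).le]
  have hlimit : ∑ k, a k ^ 2 / (x k * F k (cstar k)) = S ^ 2 := by
    rw [sum_congr rfl fun k _ => hlimit_term k, ← mul_sum, sq]
  have hupper : Tendsto (fun C => C * ∑ k, a k ^ 2 / (⌊x k * C⌋₊ * F k (cstar k))) atTop
      (𝓝 (S ^ 2)) := by
    rw [← hlimit]
    exact tendsto_mul_sum_div_nat_floor_mul hx fun k => (hFc k).ne'
  have hmem :=
    eventually_floor_allocation_mem_achievableCRB a (fun k => (hcstar k).le) hFc hx hbudget
  refine tendsto_of_tendsto_of_tendsto_of_le_of_le' tendsto_const_nhds hupper ?_ ?_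
  · filter_upwards [eventually_gt_atTop 0, hmem] with C hC hCmem
    rw [hV]
    exact sq_sum_mul_sqrt_le_mul_sInf_achievableCRB (fun k => (hpstar k).le) hFle hC ⟨_, hCmem⟩
  · filter_upwards [eventually_ge_atTop 0, hmem] with C hC hCmem
    rw [hV]
    exact mul_le_mul_of_nonneg_left (csInf_le achievableCRB_bddBelow hCmem) hC

/-- Main theorem on optimal sensing from `K` independent heterogeneous data sources:
the smallest achievable Cramér–Rao bound `V C` under total budget `C` satisfies
`C · V C → (∑ a k √(pstar k))²` as `C → ∞`. -/
theorem clean_sensing_main (K : ℕ) (hK : 1 ≤ K)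
    (F : Fin K → ℝ → ℝ)
    (hF0 : ∀ k c, 0 ≤ c → 0 ≤ F k c)
    (hFmono : ∀ k, MonotoneOn (F k) (Set.Ici (0:ℝ)))
    (cstar pstar : Fin K → ℝ)
    (hcstar : ∀ k, 0 < cstar k) (hpstar : ∀ k, 0 < pstar k)
    (hFeq : ∀ k, F k (cstar k) = cstar k / pstar k)
    (hFle : ∀ k c, 0 ≤ c → pstar k * F k c ≤ c)
    (a : Fin K → ℝ) (ha : ∀ k, 0 < a k)
    (V : ℝ → ℝ)
    (hV : ∀ C : ℝ, V C = sInf {y : ℝ |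
      ∃ (m : Fin K → ℕ) (c : (k : Fin K) → Fin (m k) → ℝ),
        (∀ k i, 0 ≤ c k i) ∧ (∑ k, ∑ i, c k i) ≤ C ∧
        (∀ k, 0 < ∑ i, F k (c k i)) ∧
        y = ∑ k, (a k)^2 / (∑ i, F k (c k i))}) :
    Filter.Tendsto (fun C : ℝ => C * V C) Filter.atTop
      (nhds ((∑ k, a k * Real.sqrt (pstar k))^2)) :=
  clean_sensing_main_general K F cstar pstar hcstar hpstar hFeq hFle a ha V hV
end

section
/- Let K ≥ 1 be an integer and let α₁, …, α_K > 0 with ∑_{k=1}^K α_k = 1 and θ₁, …, θ_K ∈ (0,1). For each k, let β_k, γ_k: ℝ≥0 → [0,1] be such that P_k(c) = (1−β_k(c)−γ_k(c))θ_k + γ_k(c) satisfies 0 < P_k(c) < 1 for all c ≥ 0, and define I_k(c) = (1−β_k(c)−γ_k(c))²/(P_k(c)(1−P_k(c))). Assume each I_k is nondecreasing and there exist c_k** > 0 and p_k* > 0 with I_k(c_k**) = c_k**/p_k* and p_k*·I_k(c) ≤ c for all c ≥ 0. For C > 0 define V(C) as the infimum, over all K-tuples of finite cost lists (c_i^k ≥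 0, 1 ≤ i ≤ m_k) with ∑_{k,i} c_i^k ≤ C and ∑_i I_k(c_i^k) > 0 for each k, of ∑_{k=1}^K α_k² / (∑_{i=1}^{m_k} I_k(c_i^k)). Then lim_{C→∞} C·V(C) = (∑_{k=1}^K α_k·√(p_k*))². -/
/-!
Since `p k * I k c ≤ c`, a group polled with total cost `B k` yields Fisher information at most
`B k / p k`, so by Cauchy–Schwarz every achievable bound under budget `C` is at least
`(∑ α k * √(p k))² / C`. Conversely, giving group `k` the budget share
`λ k ∝ α k * √(p k)` and spending it on `⌊λ k * C / cstar k⌋` responses at the optimal cost `cstar k`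
attains this bound up to the rounding error of the floor, which vanishes as `C → ∞`.
-/

open Filter Topology Finset

namespace Polling

variable {ι : Type*} [Fintype ι]

section Bounds

variable (α : ι → ℝ) (I : ι → ℝ → ℝ)

def achievableBounds (C : ℝ) : Set ℝ :=
  {y : ℝ | ∃ (m : ι → ℕ) (c : (k : ι) → Fin (m k) → ℝ),
    (∀ k i, 0 ≤ c k i) ∧ (∑ k, ∑ i, c k i) ≤ C ∧
    (∀ k, 0 < ∑ i, I k (c k i)) ∧
    y = ∑ k, (α k)^2 / (∑ i, I k (c k i))}

variable {α I} {C y : ℝ}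

lemma nonneg_of_mem_achievableBounds (hy : y ∈ achievableBounds α I C) : 0 ≤ y := by
  obtain ⟨m, c, -, -, hJ, rfl⟩ := hy
  exact sum_nonneg fun k _ => div_nonneg (sq_nonneg _) (hJ k).le

lemma bddBelow_achievableBounds : BddBelow (achievableBounds α I C) :=
  ⟨0, fun _ hy => nonneg_of_mem_achievableBounds hy⟩

lemma sq_sum_le_mul_of_mem_achievableBounds {p : ι → ℝ} (hp : ∀ k, 0 ≤ p k)
    (hIle : ∀ k c, 0 ≤ c → p k * I k c ≤ c) (hy : y ∈ achievableBounds α I C) :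
    (∑ k, α k * √(p k))^2 ≤ C * y := by
  obtain ⟨m, c, hc, hcost, hJ, rfl⟩ := hy
  set J : ι → ℝ := fun k => ∑ i, I k (c k i)
  have hpJ : ∑ k, p k * J k ≤ C :=
    calc ∑ k, p k * J k ≤ ∑ k, ∑ i, c k i := sum_le_sum fun k _ => by
          rw [mul_sum]; exact sum_le_sum fun i _ => hIle k _ (hc k i)
      _ ≤ C := hcost
  calc (∑ k, α k * √(p k))^2 ≤ (∑ k, α k ^ 2 / J k) * ∑ k, p k * J k := by
        refine sum_sq_le_sum_mul_sum_of_sq_le_mul _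
          (fun k _ => div_nonneg (sq_nonneg _) (hJ k).le)
          (fun k _ => mul_nonneg (hp k) (hJ k).le) fun k _ => le_of_eq ?_
        rw [mul_pow, Real.sq_sqrt (hp k)]
        field_simp [show J k ≠ 0 from (hJ k).ne']
    _ ≤ (∑ k, α k ^ 2 / J k) * C :=
        mul_le_mul_of_nonneg_left hpJ (sum_nonneg fun k _ => div_nonneg (sq_nonneg _) (hJ k).le)
    _ = C * ∑ k, α k ^ 2 / J k := mul_comm _ _

lemma sq_sum_le_mul_csInf_achievableBounds {p : ι → ℝ} (hp : ∀ k, 0 ≤ p k)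
    (hIle : ∀ k c, 0 ≤ c → p k * I k c ≤ c) (hC : 0 < C)
    (hne : (achievableBounds α I C).Nonempty) :
    (∑ k, α k * √(p k))^2 ≤ C * sInf (achievableBounds α I C) := by
  rw [← div_le_iff₀' hC]
  exact le_csInf hne fun y hy =>
    (div_le_iff₀' hC).2 (sq_sum_le_mul_of_mem_achievableBounds hp hIle hy)

lemma sum_div_mul_mem_achievableBounds {c : ι → ℝ} {m : ι → ℕ} (hc : ∀ k, 0 ≤ c k)
    (hIc : ∀ k, 0 < I k (c k)) (hm : ∀ k, 0 < m k) (hcost : ∑ k, m k * c k ≤ C) :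
    ∑ k, α k ^ 2 / (m k * I k (c k)) ∈ achievableBounds α I C := by
  refine ⟨m, fun k _ => c k, fun k _ => hc k, ?_, fun k => ?_, ?_⟩
  · simpa using hcost
  · simpa using mul_pos (Nat.cast_pos.2 (hm k)) (hIc k)
  · simp

end Bounds

section Allocation

variable {α p cstar : ι → ℝ}

noncomputable def optimalShare (α p : ι → ℝ) (k : ι) : ℝ := α k * √(p k) / ∑ j, α j * √(p j)

noncomputable def optimalCount (α p cstar : ι → ℝ) (C : ℝ) (k : ι) : ℕ :=
  ⌊optimalShare α p k / cstar k * C⌋₊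

lemma sum_mul_sqrt_pos [Nonempty ι] (hα : ∀ k, 0 < α k) (hp : ∀ k, 0 < p k) :
    0 < ∑ k, α k * √(p k) :=
  sum_pos (fun k _ => mul_pos (hα k) (Real.sqrt_pos.2 (hp k))) univ_nonempty

lemma optimalShare_pos (hα : ∀ k, 0 < α k) (hp : ∀ k, 0 < p k) (k : ι) :
    0 < optimalShare α p k :=
  have : Nonempty ι := ⟨k⟩
  div_pos (mul_pos (hα k) (Real.sqrt_pos.2 (hp k))) (sum_mul_sqrt_pos hα hp)

lemma sum_optimalShare (h : ∑ k, α k * √(p k) ≠ 0) : ∑ k, optimalShare α p k = 1 := by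
  simp only [optimalShare, ← sum_div, div_self h]

lemma sum_sq_mul_div_optimalShare (hp : ∀ k, 0 ≤ p k) :
    ∑ k, α k ^ 2 * p k / optimalShare α p k = (∑ k, α k * √(p k))^2 := by
  have hterm : ∀ x S : ℝ, x ^ 2 / (x / S) = x * S := fun x S => by
    rcases eq_or_ne x 0 with rfl | hx
    · simp
    · rw [div_div_eq_mul_div, sq, mul_assoc, mul_div_cancel_left₀ _ hx]
  calc ∑ k, α k ^ 2 * p k / optimalShare α p k
      = ∑ k, (α k * √(p k)) * ∑ j, α j * √(p j) := sum_congr rfl fun k _ => by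
        rw [optimalShare, ← hterm (α k * √(p k)), mul_pow, Real.sq_sqrt (hp k)]
    _ = (∑ k, α k * √(p k))^2 := by rw [← sum_mul, sq]

lemma optimalCount_mul_le (hα : ∀ k, 0 < α k) (hp : ∀ k, 0 < p k) (hc : ∀ k, 0 < cstar k)
    {C : ℝ} (hC : 0 ≤ C) (k : ι) :
    optimalCount α p cstar C k * cstar k ≤ optimalShare α p k * C := by
  have hshare := (optimalShare_pos hα hp k).le
  calc (optimalCount α p cstar C k : ℝ) * cstar k
      ≤ optimalShare α p k / cstar k * C * cstar k := mul_le_mul_of_nonneg_right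
        (Nat.floor_le (mul_nonneg (div_nonneg hshare (hc k).le) hC)) (hc k).le
    _ = optimalShare α p k * C := by field_simp [(hc k).ne']

lemma tendsto_optimalCount_atTop (hα : ∀ k, 0 < α k) (hp : ∀ k, 0 < p k)
    (hc : ∀ k, 0 < cstar k) (k : ι) :
    Tendsto (fun C => optimalCount α p cstar C k) atTop atTop :=
  tendsto_nat_floor_atTop.comp
    (tendsto_id.const_mul_atTop (div_pos (optimalShare_pos hα hp k) (hc k)))

lemma tendsto_optimalCount_mul_div (hα : ∀ k, 0 < α k) (hp : ∀ k, 0 < p k)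
    (hc : ∀ k, 0 < cstar k) (k : ι) :
    Tendsto (fun C => optimalCount α p cstar C k * cstar k / C) atTop
      (𝓝 (optimalShare α p k)) := by
  have h := (tendsto_nat_floor_mul_div_atTop
    (div_pos (optimalShare_pos hα hp k) (hc k)).le).mul_const (cstar k)
  rw [div_mul_cancel₀ _ (hc k).ne'] at h
  exact h.congr fun C => by simp only [optimalCount]; ring

variable {I : ι → ℝ → ℝ}

lemma eventually_sum_div_optimalCount_mem_achievableBounds [Nonempty ι] (hα : ∀ k, 0 < α k)
    (hp : ∀ k, 0 < p k) (hc : ∀ k, 0 < cstar k) (hIc : ∀ k, 0 < I k (cstar k)) :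
    ∀ᶠ C in atTop, ∑ k, α k ^ 2 / (optimalCount α p cstar C k * I k (cstar k)) ∈
      achievableBounds α I C := by
  have hcount : ∀ᶠ C in atTop, ∀ k, 0 < optimalCount α p cstar C k :=
    eventually_all.2 fun k => (tendsto_optimalCount_atTop hα hp hc k).eventually_gt_atTop 0
  filter_upwards [hcount, eventually_ge_atTop 0] with C hm hC
  refine sum_div_mul_mem_achievableBounds (fun k => (hc k).le) hIc hm ?_
  calc ∑ k, (optimalCount α p cstar C k : ℝ) * cstar k ≤ ∑ k, optimalShare α p k * C :=
        sum_le_sum fun k _ => optimalCount_mul_le hα hp hc hC k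
    _ = C := by rw [← sum_mul, sum_optimalShare (sum_mul_sqrt_pos hα hp).ne', one_mul]

lemma tendsto_mul_sum_div_optimalCount (hα : ∀ k, 0 < α k) (hp : ∀ k, 0 < p k)
    (hc : ∀ k, 0 < cstar k) (hIeq : ∀ k, I k (cstar k) = cstar k / p k) :
    Tendsto (fun C => C * ∑ k, α k ^ 2 / (optimalCount α p cstar C k * I k (cstar k))) atTop
      (𝓝 ((∑ k, α k * √(p k))^2)) := by
  rw [← sum_sq_mul_div_optimalShare fun k => (hp k).le]
  have hterm : ∀ k, Tendsto (fun C => α k ^ 2 * p k / (optimalCount α p cstar C k * cstar k / C))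
      atTop (𝓝 (α k ^ 2 * p k / optimalShare α p k)) := fun k =>
    tendsto_const_nhds.div (tendsto_optimalCount_mul_div hα hp hc k)
      (optimalShare_pos hα hp k).ne'
  refine (tendsto_finsetSum univ fun k _ => hterm k).congr' ?_
  filter_upwards [eventually_ne_atTop 0] with C hC
  rw [mul_sum]
  refine sum_congr rfl fun k _ => ?_
  rw [hIeq k]
  field_simp [(hp k).ne', (hc k).ne']

end Allocation

end Polling

open Polling

theorem optimal_polling_general (K : ℕ) (hK : 1 ≤ K)
    (α : Fin K → ℝ)
    (hα : ∀ k, 0 < α k)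
    (I : Fin K → ℝ → ℝ)
    (cstar pstar : Fin K → ℝ)
    (hcstar : ∀ k, 0 < cstar k) (hpstar : ∀ k, 0 < pstar k)
    (hIeq : ∀ k, I k (cstar k) = cstar k / pstar k)
    (hIle : ∀ k c, 0 ≤ c → pstar k * I k c ≤ c)
    (V : ℝ → ℝ)
    (hV : ∀ C : ℝ, V C = sInf {y : ℝ |
      ∃ (m : Fin K → ℕ) (c : (k : Fin K) → Fin (m k) → ℝ),
        (∀ k i, 0 ≤ c k i) ∧ (∑ k, ∑ i, c k i) ≤ C ∧
        (∀ k, 0 < ∑ i, I k (c k i)) ∧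
        y = ∑ k, (α k)^2 / (∑ i, I k (c k i))}) :
    Filter.Tendsto (fun C : ℝ => C * V C) Filter.atTop
      (nhds ((∑ k, α k * Real.sqrt (pstar k))^2)) := by
  have : Nonempty (Fin K) := ⟨⟨0, hK⟩⟩
  have hV' : ∀ C, V C = sInf (achievableBounds α I C) := hV
  have hmem := eventually_sum_div_optimalCount_mem_achievableBounds hα hpstar hcstar
    fun k => (hIeq k).symm ▸ div_pos (hcstar k) (hpstar k)
  refine tendsto_of_tendsto_of_tendsto_of_le_of_le' tendsto_const_nhds
    (tendsto_mul_sum_div_optimalCount hα hpstar hcstar hIeq) ?_ ?_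
  · filter_upwards [hmem, eventually_gt_atTop 0] with C hC hCpos
    rw [hV']
    exact sq_sum_le_mul_csInf_achievableBounds (fun k => (hpstar k).le) hIle hCpos ⟨_, hC⟩
  · filter_upwards [hmem, eventually_ge_atTop 0] with C hC hC0
    rw [hV']
    exact mul_le_mul_of_nonneg_left (csInf_le bddBelow_achievableBounds hC) hC0

/-- Optimal polling theorem: with `K` demographic groups of weights `α k` and support
fractions `θv k`, cost-dependent distortion probabilities `β k c`, `γ k c`, and per-response
Fisher information `I k c`, the smallest achievable Cramér–Rao bound `V C` under total
polling budget `C` satisfies `C · V C → (∑ α k √(pstar k))²` as `C → ∞`. -/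
theorem optimal_polling (K : ℕ) (hK : 1 ≤ K)
    (α θv : Fin K → ℝ)
    (hα : ∀ k, 0 < α k) (hαsum : (∑ k, α k) = 1)
    (hθv : ∀ k, θv k ∈ Set.Ioo (0:ℝ) 1)
    (β γ : Fin K → ℝ → ℝ)
    (hβ : ∀ k c, 0 ≤ c → β k c ∈ Set.Icc (0:ℝ) 1)
    (hγ : ∀ k c, 0 ≤ c → γ k c ∈ Set.Icc (0:ℝ) 1)
    (Pk : Fin K → ℝ → ℝ)
    (hPk : ∀ k c, Pk k c = (1 - β k c - γ k c) * θv k + γ k c)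
    (hPkmem : ∀ k c, 0 ≤ c → Pk k c ∈ Set.Ioo (0:ℝ) 1)
    (I : Fin K → ℝ → ℝ)
    (hI : ∀ k c, I k c = (1 - β k c - γ k c)^2 / (Pk k c * (1 - Pk k c)))
    (hImono : ∀ k, MonotoneOn (I k) (Set.Ici (0:ℝ)))
    (cstar pstar : Fin K → ℝ)
    (hcstar : ∀ k, 0 < cstar k) (hpstar : ∀ k, 0 < pstar k)
    (hIeq : ∀ k, I k (cstar k) = cstar k / pstar k)
    (hIle : ∀ k c, 0 ≤ c → pstar k * I k c ≤ c)
    (V : ℝ → ℝ)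
    (hV : ∀ C : ℝ, V C = sInf {y : ℝ |
      ∃ (m : Fin K → ℕ) (c : (k : Fin K) → Fin (m k) → ℝ),
        (∀ k i, 0 ≤ c k i) ∧ (∑ k, ∑ i, c k i) ≤ C ∧
        (∀ k, 0 < ∑ i, I k (c k i)) ∧
        y = ∑ k, (α k)^2 / (∑ i, I k (c k i))}) :
    Filter.Tendsto (fun C : ℝ => C * V C) Filter.atTop
      (nhds ((∑ k, α k * Real.sqrt (pstar k))^2)) :=
  optimal_polling_general K hK α hα I cstar pstar hcstar hpstar hIeq hIle V hV
end

section
/- Let (X, 𝒜, μ) be a measure space and D ⊆ ℝ a set of parameter values. For each θ' ∈ D let p(·;θ'): X → ℝ be measurable with p(·;θ') ≥ 0 and ∫ p(x;θ') dμ(x) = 1. Fix θ ∈ D with p(x;θ) > 0 for μ-a.e. x, and let g: X → ℝ be an unbiased estimator (∫ p(x;θ')|g(x)| dμ(x) < ∞ and ∫ p(x;θ') g(x) dμ(x) = θ' for every θ' ∈ D) with ∫ p(x;θ)(g(x)−θ)² dμ(x) < ∞. Let N ≥ 1, let θ_{1,i}, θ_{2,i} ∈ D for i = 1,…,N, set t_i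 = θ_{1,i} − θ_{2,i} and q_i(x) = p(x;θ_{1,i}) − p(x;θ_{2,i}), assume ∫ q_i(x)²/p(x;θ) dμ(x) < ∞ for every i, and assume the N×N matrix B with entries B_{ij} = ∫ q_i(x)q_j(x)/p(x;θ) dμ(x) is invertible. Then ∫ p(x;θ)(g(x)−θ)² dμ(x) ≥ tᵀ B⁻¹ t, where t = (t₁,…,t_N)ᵀ. -/
/-! With `u = B⁻¹ t` and `S = ∑ i, u i • q i`, unbiasedness gives `∫ (g - θ) S dμ = u ⬝ t`,
and by definition of `B`, `∫ S² / p(·;θ) dμ = u ⬝ B u = u ⬝ t`. Integrating the pointwise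
inequality `2 a s - s² / w ≤ w a²` (that is, `(w a - s)² / w ≥ 0`) with `a = g - θ`,
`s = S`, `w = p(·;θ)` yields `2 (u ⬝ t) - u ⬝ t ≤ ∫ p(·;θ) (g - θ)² dμ`. -/

open MeasureTheory Matrix

lemma Finset.sum_mul_sq_div {ι : Type*} (s : Finset ι) (u q : ι → ℝ) (w : ℝ) :
    (∑ i ∈ s, u i * q i) ^ 2 / w = ∑ i ∈ s, ∑ j ∈ s, u i * u j * (q i * q j / w) := by
  simp only [sq, Finset.sum_mul_sum, Finset.sum_div]
  exact Finset.sum_congr rfl fun i _ => Finset.sum_congr rfl fun j _ => by ring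

lemma two_mul_mul_sub_sq_div_le {w a s : ℝ} (hw : 0 < w) :
    2 * (a * s) - s ^ 2 / w ≤ w * a ^ 2 := by
  have hsq : 2 * (a * s) - s ^ 2 / w = w * a ^ 2 - (w * a - s) ^ 2 / w := by
    field_simp
    ring
  rw [hsq, sub_le_self_iff]
  positivity

section Integrals

variable {X : Type*} [MeasurableSpace X] {μ : Measure X}

lemma two_mul_integral_mul_sub_integral_sq_div_le {w f s : X → ℝ}
    (hw : ∀ᵐ x ∂μ, 0 < w x) (hfs : Integrable (fun x => f x * s x) μ)
    (hs : Integrable (fun x => s x ^ 2 / w x) μ) (hf : Integrable (fun x => w x * f x ^ 2) μ) :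
    2 * ∫ x, f x * s x ∂μ - ∫ x, s x ^ 2 / w x ∂μ ≤ ∫ x, w x * f x ^ 2 ∂μ := by
  rw [← integral_const_mul, ← integral_sub (hfs.const_mul 2) hs]
  refine integral_mono_ae ((hfs.const_mul 2).sub hs) hf ?_
  filter_upwards [hw] with x hx
  exact two_mul_mul_sub_sq_div_le hx

lemma MeasureTheory.Integrable.mul_div_of_sq_div {f g w : X → ℝ} (hf : AEMeasurable f μ)
    (hg : AEMeasurable g μ) (hwm : AEMeasurable w μ) (hw : ∀ᵐ x ∂μ, 0 ≤ w x)
    (hf2 : Integrable (fun x => f x ^ 2 / w x) μ) (hg2 : Integrable (fun x => g x ^ 2 / w x) μ) :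
    Integrable (fun x => f x * g x / w x) μ := by
  refine ((hf2.add hg2).div_const 2).mono' ((hf.mul hg).div hwm).aestronglyMeasurable ?_
  filter_upwards [hw] with x hx
  have amgm : |f x * g x| ≤ (f x ^ 2 + g x ^ 2) / 2 := by
    rw [abs_mul, le_div_iff₀ two_pos]
    nlinarith [sq_nonneg (|f x| - |g x|), sq_abs (f x), sq_abs (g x)]
  calc ‖f x * g x / w x‖ = |f x * g x| / w x := by
        rw [Real.norm_eq_abs, abs_div, abs_of_nonneg hx]
    _ ≤ (f x ^ 2 + g x ^ 2) / 2 / w x := div_le_div_of_nonneg_right amgm hx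
    _ = (f x ^ 2 / w x + g x ^ 2 / w x) / 2 := by ring

section Densities

variable {p p₁ p₂ g : X → ℝ} {a a₁ a₂ : ℝ}

lemma integrable_sub_const_mul_of_integral_eq_one (hp : ∫ x, p x ∂μ = 1)
    (hpg : Integrable (fun x => p x * g x) μ) (c : ℝ) :
    Integrable (fun x => (g x - c) * p x) μ := by
  have hpint : Integrable p μ := .of_integral_ne_zero (by simp [hp])
  refine (hpg.sub (hpint.const_mul c)).congr (.of_forall fun x => ?_)
  simp only [Pi.sub_apply]
  ring

lemma integral_sub_const_mul_of_integral_eq_one (hp : ∫ x, p x ∂μ = 1)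
    (hpg : Integrable (fun x => p x * g x) μ) (hmean : ∫ x, p x * g x ∂μ = a) (c : ℝ) :
    ∫ x, (g x - c) * p x ∂μ = a - c := by
  have hpint : Integrable p μ := .of_integral_ne_zero (by simp [hp])
  simp_rw [sub_mul, mul_comm (g _)]
  rw [integral_sub hpg (hpint.const_mul c), integral_const_mul, hp, hmean, mul_one]

lemma integrable_sub_const_mul_sub (hp₁ : ∫ x, p₁ x ∂μ = 1) (hp₂ : ∫ x, p₂ x ∂μ = 1)
    (hpg₁ : Integrable (fun x => p₁ x * g x) μ) (hpg₂ : Integrable (fun x => p₂ x * g x) μ)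
    (c : ℝ) : Integrable (fun x => (g x - c) * (p₁ x - p₂ x)) μ := by
  simp_rw [mul_sub]
  exact (integrable_sub_const_mul_of_integral_eq_one hp₁ hpg₁ c).sub
    (integrable_sub_const_mul_of_integral_eq_one hp₂ hpg₂ c)

lemma integral_sub_const_mul_sub (hp₁ : ∫ x, p₁ x ∂μ = 1) (hp₂ : ∫ x, p₂ x ∂μ = 1)
    (hpg₁ : Integrable (fun x => p₁ x * g x) μ) (hpg₂ : Integrable (fun x => p₂ x * g x) μ)
    (hmean₁ : ∫ x, p₁ x * g x ∂μ = a₁) (hmean₂ : ∫ x, p₂ x * g x ∂μ = a₂) (c : ℝ) :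
    ∫ x, (g x - c) * (p₁ x - p₂ x) ∂μ = a₁ - a₂ := by
  simp_rw [mul_sub]
  rw [integral_sub (integrable_sub_const_mul_of_integral_eq_one hp₁ hpg₁ c)
      (integrable_sub_const_mul_of_integral_eq_one hp₂ hpg₂ c),
    integral_sub_const_mul_of_integral_eq_one hp₁ hpg₁ hmean₁,
    integral_sub_const_mul_of_integral_eq_one hp₂ hpg₂ hmean₂]
  ring

end Densities

section LinearCombination

variable {ι : Type*} [Fintype ι] (q : ι → X → ℝ) (u : ι → ℝ)

lemma integrable_mul_sum {f : X → ℝ} (h : ∀ i, Integrable (fun x => f x * q i x) μ) :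
    Integrable (fun x => f x * ∑ i, u i * q i x) μ := by
  simp_rw [Finset.mul_sum, mul_left_comm (f _)]
  exact integrable_finsetSum _ fun i _ => (h i).const_mul (u i)

lemma integral_mul_sum {f : X → ℝ} (h : ∀ i, Integrable (fun x => f x * q i x) μ) :
    ∫ x, f x * ∑ i, u i * q i x ∂μ = u ⬝ᵥ fun i => ∫ x, f x * q i x ∂μ := by
  simp_rw [Finset.mul_sum, mul_left_comm (f _)]
  rw [integral_finsetSum _ fun i _ => (h i).const_mul (u i)]
  simp only [integral_const_mul, dotProduct]

variable {w : X → ℝ}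

lemma integrable_sum_sq_div (hqq : ∀ i j, Integrable (fun x => q i x * q j x / w x) μ) :
    Integrable (fun x => (∑ i, u i * q i x) ^ 2 / w x) μ := by
  simp_rw [Finset.sum_mul_sq_div]
  exact integrable_finsetSum _ fun i _ => integrable_finsetSum _ fun j _ =>
    (hqq i j).const_mul _

lemma integral_sum_sq_div (hqq : ∀ i j, Integrable (fun x => q i x * q j x / w x) μ)
    {B : Matrix ι ι ℝ} (hB : ∀ i j, B i j = ∫ x, q i x * q j x / w x ∂μ) :
    ∫ x, (∑ i, u i * q i x) ^ 2 / w x ∂μ = u ⬝ᵥ (B *ᵥ u) := by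
  simp_rw [Finset.sum_mul_sq_div]
  rw [integral_finsetSum _ fun i _ => integrable_finsetSum _ fun j _ => (hqq i j).const_mul _]
  simp only [dotProduct, mulVec, Finset.mul_sum, hB]
  refine Finset.sum_congr rfl fun i _ => ?_
  rw [integral_finsetSum _ fun j _ => (hqq i j).const_mul _]
  exact Finset.sum_congr rfl fun j _ => by rw [integral_const_mul]; ring

end LinearCombination

end Integrals

theorem lower_bound_series_A_general {X : Type*} [MeasurableSpace X]
    (μ : Measure X) (D : Set ℝ)
    (p : ℝ → X → ℝ)
    (hpm : ∀ θ' ∈ D, Measurable (p θ'))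
    (hp1 : ∀ θ' ∈ D, ∫ x, p θ' x ∂μ = 1)
    (θ : ℝ) (hθ : θ ∈ D) (hθpos : ∀ᵐ x ∂μ, 0 < p θ x)
    (g : X → ℝ)
    (hgint : ∀ θ' ∈ D, Integrable (fun x => p θ' x * g x) μ)
    (hunbiased : ∀ θ' ∈ D, ∫ x, p θ' x * g x ∂μ = θ')
    (hmse : Integrable (fun x => p θ x * (g x - θ)^2) μ)
    (N : ℕ)
    (θ1 θ2 : Fin N → ℝ) (hθ1 : ∀ i, θ1 i ∈ D) (hθ2 : ∀ i, θ2 i ∈ D)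
    (t : Fin N → ℝ) (ht : ∀ i, t i = θ1 i - θ2 i)
    (q : Fin N → X → ℝ) (hq : ∀ i x, q i x = p (θ1 i) x - p (θ2 i) x)
    (hqint : ∀ i, Integrable (fun x => (q i x)^2 / p θ x) μ)
    (B : Matrix (Fin N) (Fin N) ℝ)
    (hB : ∀ i j, B i j = ∫ x, q i x * q j x / p θ x ∂μ)
    (hBinv : IsUnit B.det) :
    t ⬝ᵥ (B⁻¹ *ᵥ t) ≤ ∫ x, p θ x * (g x - θ)^2 ∂μ := by
  set u := B⁻¹ *ᵥ t
  have hBu : B *ᵥ u = t := by rw [mulVec_mulVec, mul_nonsing_inv B hBinv, one_mulVec]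
  have hcov_int : ∀ i, Integrable (fun x => (g x - θ) * q i x) μ := fun i => by
    simp_rw [hq i]
    exact integrable_sub_const_mul_sub (hp1 _ (hθ1 i)) (hp1 _ (hθ2 i))
      (hgint _ (hθ1 i)) (hgint _ (hθ2 i)) θ
  have hcov : (fun i => ∫ x, (g x - θ) * q i x ∂μ) = t := funext fun i => by
    simp_rw [hq i, ht i]
    exact integral_sub_const_mul_sub (hp1 _ (hθ1 i)) (hp1 _ (hθ2 i)) (hgint _ (hθ1 i))
      (hgint _ (hθ2 i)) (hunbiased _ (hθ1 i)) (hunbiased _ (hθ2 i)) θ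
  have hqm : ∀ i, AEMeasurable (q i) μ := fun i => by
    rw [show q i = p (θ1 i) - p (θ2 i) from funext (hq i)]
    exact ((hpm _ (hθ1 i)).sub (hpm _ (hθ2 i))).aemeasurable
  have hqq : ∀ i j, Integrable (fun x => q i x * q j x / p θ x) μ := fun i j =>
    (hqint i).mul_div_of_sq_div (hqm i) (hqm j) (hpm θ hθ).aemeasurable
      (hθpos.mono fun _ => le_of_lt) (hqint j)
  have key := two_mul_integral_mul_sub_integral_sq_div_le hθpos
    (integrable_mul_sum q u hcov_int) (integrable_sum_sq_div q u hqq) hmse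
  rw [integral_mul_sum q u hcov_int, integral_sum_sq_div q u hqq hB, hcov, hBu] at key
  rw [dotProduct_comm]
  linarith

/-- Lower Bounds Series A (ABS): the mean-squared error of any unbiased estimator is at
least `tᵀ B⁻¹ t`, where `t i = θ1 i - θ2 i`, `q i = p(·;θ1 i) - p(·;θ2 i)` and
`B i j = ∫ q i q j / p(·;θ) dμ`. -/
theorem lower_bound_series_A {X : Type*} [MeasurableSpace X]
    (μ : Measure X) (D : Set ℝ)
    (p : ℝ → X → ℝ)
    (hpm : ∀ θ' ∈ D, Measurable (p θ'))
    (hp0 : ∀ θ' ∈ D, ∀ x, 0 ≤ p θ' x)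
    (hp1 : ∀ θ' ∈ D, ∫ x, p θ' x ∂μ = 1)
    (θ : ℝ) (hθ : θ ∈ D) (hθpos : ∀ᵐ x ∂μ, 0 < p θ x)
    (g : X → ℝ) (hgm : Measurable g)
    (hgint : ∀ θ' ∈ D, Integrable (fun x => p θ' x * g x) μ)
    (hunbiased : ∀ θ' ∈ D, ∫ x, p θ' x * g x ∂μ = θ')
    (hmse : Integrable (fun x => p θ x * (g x - θ)^2) μ)
    (N : ℕ) (hN : 1 ≤ N)
    (θ1 θ2 : Fin N → ℝ) (hθ1 : ∀ i, θ1 i ∈ D) (hθ2 : ∀ i, θ2 i ∈ D)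
    (t : Fin N → ℝ) (ht : ∀ i, t i = θ1 i - θ2 i)
    (q : Fin N → X → ℝ) (hq : ∀ i x, q i x = p (θ1 i) x - p (θ2 i) x)
    (hqint : ∀ i, Integrable (fun x => (q i x)^2 / p θ x) μ)
    (B : Matrix (Fin N) (Fin N) ℝ)
    (hB : ∀ i j, B i j = ∫ x, q i x * q j x / p θ x ∂μ)
    (hBinv : IsUnit B.det) :
    t ⬝ᵥ (B⁻¹ *ᵥ t) ≤ ∫ x, p θ x * (g x - θ)^2 ∂μ :=
  lower_bound_series_A_general μ D p hpm hp1 θ hθ hθpos g hgint hunbiased hmse N θ1 θ2 hθ1 hθ2 t ht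
    q hq hqint B hB hBinv
end

section
/- Let (X, 𝒜, μ) be a measure space and D ⊆ ℝ a set of parameter values. For each θ' ∈ D let p(·;θ'): X → ℝ be measurable with p(·;θ') ≥ 0 and ∫ p(x;θ') dμ(x) = 1. Fix θ ∈ D with p(x;θ) > 0 for μ-a.e. x, and let g: X → ℝ be an unbiased estimator (∫ p(x;θ')|g(x)| dμ(x) < ∞ and ∫ p(x;θ') g(x) dμ(x) = θ' for every θ' ∈ D) with ∫ p(x;θ)(g(x)−θ)² dμ(x) < ∞. Then for any θ₁, θ₂ ∈ D such that 0 < ∫ (p(x;θ₁) − p(x;θ₂))²/p(x;θ) dμ(x) < ∞, it holds that ∫ p(x;θ)(g(x)−θ)² dμ(x) ≥ (θ₁ − θ₂)² / ∫ (p(x;θ₁) − p(x;θ₂))²/p(x;θ) dμ(x). -/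
/-!
Unbiasedness of `g` at `θ₁` and `θ₂`, together with `∫ p(·;θ') = 1`, gives
`∫ (p(x;θ₁) - p(x;θ₂)) (g(x) - θ) dμ = θ₁ - θ₂`. Writing the integrand as
`(√p(x;θ) (g(x) - θ)) · ((p(x;θ₁) - p(x;θ₂)) / √p(x;θ))`, the Cauchy–Schwarz inequality bounds
`(θ₁ - θ₂)²` by the mean-squared error times the χ²-type integral.
-/

open MeasureTheory

namespace WeightedCauchySchwarz

lemma sq_add_sq_div_sub_eq {q : ℝ} (hq : q ≠ 0) (u v t : ℝ) :
    q * v ^ 2 + t ^ 2 * (u ^ 2 / q) - 2 * t * (u * v) = (q * v - t * u) ^ 2 / q := by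
  field_simp
  ring

lemma two_mul_mul_le_sq_add_sq_div {q : ℝ} (hq : 0 < q) (u v t : ℝ) :
    2 * t * (u * v) ≤ q * v ^ 2 + t ^ 2 * (u ^ 2 / q) := by
  rw [← sub_nonneg, sq_add_sq_div_sub_eq hq.ne']
  positivity

lemma abs_mul_le_sq_add_sq_div {q : ℝ} (hq : 0 < q) (u v : ℝ) :
    |u * v| ≤ (q * v ^ 2 + u ^ 2 / q) / 2 := by
  have hplus := two_mul_mul_le_sq_add_sq_div hq u v 1
  have hminus := two_mul_mul_le_sq_add_sq_div hq u v (-1)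
  rw [abs_le]
  constructor <;> linarith

variable {X : Type*} [MeasurableSpace X] {μ : Measure X} {q u v : X → ℝ}

lemma integrable_mul (hq : ∀ᵐ x ∂μ, 0 < q x)
    (hu : AEStronglyMeasurable u μ) (hv : AEStronglyMeasurable v μ)
    (hqv : Integrable (fun x => q x * v x ^ 2) μ) (huq : Integrable (fun x => u x ^ 2 / q x) μ) :
    Integrable (fun x => u x * v x) μ := by
  refine ((hqv.add huq).div_const 2).mono' (hu.mul hv) ?_
  filter_upwards [hq] with x hx
  exact abs_mul_le_sq_add_sq_div hx (u x) (v x)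

theorem sq_integral_mul_le (hq : ∀ᵐ x ∂μ, 0 < q x)
    (hu : AEStronglyMeasurable u μ) (hv : AEStronglyMeasurable v μ)
    (hqv : Integrable (fun x => q x * v x ^ 2) μ) (huq : Integrable (fun x => u x ^ 2 / q x) μ) :
    (∫ x, u x * v x ∂μ) ^ 2 ≤ (∫ x, q x * v x ^ 2 ∂μ) * ∫ x, u x ^ 2 / q x ∂μ := by
  set A := ∫ x, q x * v x ^ 2 ∂μ
  set B := ∫ x, u x ^ 2 / q x ∂μ
  set C := ∫ x, u x * v x ∂μ
  have hquadratic : ∀ t : ℝ, 2 * t * C ≤ A + t ^ 2 * B := by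
    intro t
    have hmono : ∫ x, 2 * t * (u x * v x) ∂μ ≤
        ∫ x, (q x * v x ^ 2 + t ^ 2 * (u x ^ 2 / q x)) ∂μ := by
      refine integral_mono_ae ((integrable_mul hq hu hv hqv huq).const_mul _)
        (hqv.add (huq.const_mul _)) ?_
      filter_upwards [hq] with x hx
      exact two_mul_mul_le_sq_add_sq_div hx (u x) (v x) t
    rwa [integral_const_mul, integral_add hqv (huq.const_mul _), integral_const_mul] at hmono
  have hdiscrim : discrim B (-2 * C) A ≤ 0 := by
    refine discrim_le_zero fun t => ?_
    linarith [hquadratic t]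
  rw [discrim] at hdiscrim
  linarith

end WeightedCauchySchwarz

lemma integral_sub_mul_sub_const {X : Type*} [MeasurableSpace X] {μ : Measure X}
    {p₁ p₂ g : X → ℝ} (c : ℝ) (h₁ : ∫ x, p₁ x ∂μ = 1) (h₂ : ∫ x, p₂ x ∂μ = 1)
    (hg₁ : Integrable (fun x => p₁ x * g x) μ) (hg₂ : Integrable (fun x => p₂ x * g x) μ) :
    ∫ x, (p₁ x - p₂ x) * (g x - c) ∂μ = (∫ x, p₁ x * g x ∂μ) - ∫ x, p₂ x * g x ∂μ := by
  have hp₁ : Integrable p₁ μ := .of_integral_ne_zero (h₁ ▸ one_ne_zero)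
  have hp₂ : Integrable p₂ μ := .of_integral_ne_zero (h₂ ▸ one_ne_zero)
  have hexpand : (fun x => (p₁ x - p₂ x) * (g x - c)) =
      fun x => (p₁ x * g x - p₂ x * g x) - c * (p₁ x - p₂ x) := by
    ext x
    ring
  have hdiff : Integrable (fun x => p₁ x * g x - p₂ x * g x) μ := hg₁.sub hg₂
  have hshift : Integrable (fun x => c * (p₁ x - p₂ x)) μ := (hp₁.sub hp₂).const_mul c
  rw [hexpand, integral_sub hdiff hshift, integral_sub hg₁ hg₂, integral_const_mul, integral_sub hp₁ hp₂, h₁, h₂, sub_self, mul_zero, sub_zero]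

theorem lower_bound_single_constraint_general {X : Type*} [MeasurableSpace X]
    (μ : Measure X) (D : Set ℝ)
    (p : ℝ → X → ℝ)
    (hpm : ∀ θ' ∈ D, Measurable (p θ'))
    (hp1 : ∀ θ' ∈ D, ∫ x, p θ' x ∂μ = 1)
    (θ : ℝ) (hθpos : ∀ᵐ x ∂μ, 0 < p θ x)
    (g : X → ℝ) (hgm : Measurable g)
    (hgint : ∀ θ' ∈ D, Integrable (fun x => p θ' x * g x) μ)
    (hunbiased : ∀ θ' ∈ D, ∫ x, p θ' x * g x ∂μ = θ')
    (hmse : Integrable (fun x => p θ x * (g x - θ)^2) μ)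
    (θ₁ θ₂ : ℝ) (hθ₁ : θ₁ ∈ D) (hθ₂ : θ₂ ∈ D)
    (hchi_int : Integrable (fun x => (p θ₁ x - p θ₂ x)^2 / p θ x) μ)
    (hchi_pos : 0 < ∫ x, (p θ₁ x - p θ₂ x)^2 / p θ x ∂μ) :
    (θ₁ - θ₂)^2 / ∫ x, (p θ₁ x - p θ₂ x)^2 / p θ x ∂μ
      ≤ ∫ x, p θ x * (g x - θ)^2 ∂μ := by
  have hcross : ∫ x, (p θ₁ x - p θ₂ x) * (g x - θ) ∂μ = θ₁ - θ₂ := by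
    rw [integral_sub_mul_sub_const θ (hp1 θ₁ hθ₁) (hp1 θ₂ hθ₂) (hgint θ₁ hθ₁) (hgint θ₂ hθ₂),
      hunbiased θ₁ hθ₁, hunbiased θ₂ hθ₂]
  have hcs := WeightedCauchySchwarz.sq_integral_mul_le (u := fun x => p θ₁ x - p θ₂ x)
    (v := fun x => g x - θ) hθpos
    ((hpm θ₁ hθ₁).sub (hpm θ₂ hθ₂)).aestronglyMeasurable
    (hgm.sub measurable_const).aestronglyMeasurable hmse hchi_int
  rw [hcross] at hcs
  exact div_le_of_le_mul₀ hchi_pos.le (integral_nonneg_of_ae <| by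
    filter_upwards [hθpos] with x hx using mul_nonneg hx.le (sq_nonneg _)) hcs

/-- Single-constraint version of Lower Bounds Series A, generalizing both the Cramér–Rao
bound and the Chapman–Robbins bound: the mean-squared error of any unbiased estimator is
at least `(θ₁ - θ₂)² / ∫ (p(x;θ₁) - p(x;θ₂))² / p(x;θ) dμ`. -/
theorem lower_bound_single_constraint {X : Type*} [MeasurableSpace X]
    (μ : Measure X) (D : Set ℝ)
    (p : ℝ → X → ℝ)
    (hpm : ∀ θ' ∈ D, Measurable (p θ'))
    (hp0 : ∀ θ' ∈ D, ∀ x, 0 ≤ p θ' x)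
    (hp1 : ∀ θ' ∈ D, ∫ x, p θ' x ∂μ = 1)
    (θ : ℝ) (hθ : θ ∈ D) (hθpos : ∀ᵐ x ∂μ, 0 < p θ x)
    (g : X → ℝ) (hgm : Measurable g)
    (hgint : ∀ θ' ∈ D, Integrable (fun x => p θ' x * g x) μ)
    (hunbiased : ∀ θ' ∈ D, ∫ x, p θ' x * g x ∂μ = θ')
    (hmse : Integrable (fun x => p θ x * (g x - θ)^2) μ)
    (θ₁ θ₂ : ℝ) (hθ₁ : θ₁ ∈ D) (hθ₂ : θ₂ ∈ D)
    (hchi_int : Integrable (fun x => (p θ₁ x - p θ₂ x)^2 / p θ x) μ)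
    (hchi_pos : 0 < ∫ x, (p θ₁ x - p θ₂ x)^2 / p θ x ∂μ) :
    (θ₁ - θ₂)^2 / ∫ x, (p θ₁ x - p θ₂ x)^2 / p θ x ∂μ
      ≤ ∫ x, p θ x * (g x - θ)^2 ∂μ :=
  lower_bound_single_constraint_general μ D p hpm hp1 θ hθpos g hgm hgint hunbiased hmse θ₁ θ₂ hθ₁
    hθ₂ hchi_int hchi_pos
end
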